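/- arXiv:1303.4488 — 4 statements merged into one kernel-verified Lean document; each statement's English description precedes it below -/
import Mathlib

section
/- Let a, k₁, k₂, k₃ be real numbers with 0 < a ≤ min{k₁, k₂, k₃}. For every z ∈ ℝ³ with ‖z‖ = 1 and every real 3×3 matrix A, the rewritten Oseen–Frank density satisfies the identity W(z,A) = k₁(tr A)² + k₂⟨z, c(A)⟩² + k₃‖z × c(A)‖² + a(tr(A·A) − (tr A)²). Moreover, for every z ∈ ℝ³ (not necessarily of unit norm) and every real 3×3 matrix A one has the coercivity bound W(z,A) ≥ a‖A‖², where ‖A‖ denotes the Frobenius norm. -/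
open scoped RealInnerProductSpace

noncomputable section

/-- Euclidean three-space. -/
abbrev E3 := EuclideanSpace ℝ (Fin 3)

/-- The space of real 3×3 matrices, equipped with the Frobenius norm
(identified with Euclidean space indexed by pairs of indices). -/
abbrev M33 := EuclideanSpace ℝ (Fin 3 × Fin 3)

/-- The cross product on ℝ³. -/
def crossV (u v : E3) : E3 :=
  (WithLp.equiv 2 (Fin 3 → ℝ)).symm ![u 1 * v 2 - u 2 * v 1, u 2 * v 0 - u 0 * v 2, u 0 * v 1 - u 1 * v 0]

/-- The axial (curl) vector c(A) = (A₃₂ − A₂₃, A₁₃ − A₃₁, A₂₁ − A₁₂) of a 3×3 matrix. -/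
def axial (A : M33) : E3 :=
  (WithLp.equiv 2 (Fin 3 → ℝ)).symm ![A (2, 1) - A (1, 2), A (0, 2) - A (2, 0), A (1, 0) - A (0, 1)]

/-- The trace of a 3×3 matrix. -/
def trace33 (A : M33) : ℝ := ∑ i : Fin 3, A (i, i)

/-- The trace of A·A for a 3×3 matrix A. -/
def trace33sq (A : M33) : ℝ := ∑ i : Fin 3, ∑ j : Fin 3, A (i, j) * A (j, i)

/-- The rewritten Oseen–Frank density
W(z,A) = a‖A‖² + (k₁−a)(tr A)² + (k₂−a)⟨z, c(A)⟩² + (k₃−a)‖z × c(A)‖². -/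
def W (a k1 k2 k3 : ℝ) (z : E3) (A : M33) : ℝ :=
  a * ‖A‖ ^ 2 + (k1 - a) * (trace33 A) ^ 2 + (k2 - a) * ⟪z, axial A⟫ ^ 2
    + (k3 - a) * ‖crossV z (axial A)‖ ^ 2

/-! The antisymmetric part of `A` is what separates `‖A‖²` from `tr(A·A)`:
`‖A‖² - tr(A·A) = ‖c(A)‖²`. Lagrange's identity `⟨z, c⟩² + ‖z × c‖² = ‖z‖²‖c‖²` then shows
that `W` differs from the classical Oseen–Frank form by `a (1 - ‖z‖²) ‖c(A)‖²`, which vanishes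
for unit `z`. Coercivity is immediate because `k₁ - a`, `k₂ - a`, `k₃ - a` are nonnegative. -/

open Matrix EuclideanSpace WithLp

theorem ofLp_crossV (u v : E3) : ofLp (crossV u v) = ofLp u ⨯₃ ofLp v := rfl

theorem inner_sq_add_norm_crossV_sq (u v : E3) :
    ⟪u, v⟫ ^ 2 + ‖crossV u v‖ ^ 2 = ‖u‖ ^ 2 * ‖v‖ ^ 2 := by
  simp only [← real_inner_self_eq_norm_sq, inner_eq_star_dotProduct, star_trivial, ofLp_crossV,
    cross_dot_cross, dotProduct_comm (ofLp v) (ofLp u)]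
  ring

theorem norm_sq_sub_trace33sq (A : M33) : ‖A‖ ^ 2 - trace33sq A = ‖axial A‖ ^ 2 := by
  simp only [real_norm_sq_eq, Fintype.sum_prod_type, Fin.sum_univ_three, trace33sq, axial,
    WithLp.equiv_symm_apply, cons_val_zero, cons_val_one, cons_val_two, head_cons, tail_cons]
  ring

theorem W_eq_add_mul_one_sub_norm_sq (a k1 k2 k3 : ℝ) (z : E3) (A : M33) :
    W a k1 k2 k3 z A =
      k1 * (trace33 A) ^ 2 + k2 * ⟪z, axial A⟫ ^ 2 + k3 * ‖crossV z (axial A)‖ ^ 2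
        + a * (trace33sq A - (trace33 A) ^ 2) + a * (1 - ‖z‖ ^ 2) * ‖axial A‖ ^ 2 := by
  rw [W]
  linear_combination a * norm_sq_sub_trace33sq A - a * inner_sq_add_norm_crossV_sq z (axial A)

theorem mul_norm_sq_le_W {a k1 k2 k3 : ℝ} (h1 : a ≤ k1) (h2 : a ≤ k2) (h3 : a ≤ k3)
    (z : E3) (A : M33) : a * ‖A‖ ^ 2 ≤ W a k1 k2 k3 z A := by
  have splay := mul_nonneg (sub_nonneg.2 h1) (sq_nonneg (trace33 A))
  have twist := mul_nonneg (sub_nonneg.2 h2) (sq_nonneg ⟪z, axial A⟫)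
  have bend := mul_nonneg (sub_nonneg.2 h3) (sq_nonneg ‖crossV z (axial A)‖)
  rw [W]
  linarith

theorem oseen_frank_identity_and_coercivity_general (a k1 k2 k3 : ℝ)
    (hmin : a ≤ min k1 (min k2 k3)) :
    (∀ z : E3, ‖z‖ = 1 → ∀ A : M33,
      W a k1 k2 k3 z A =
        k1 * (trace33 A) ^ 2 + k2 * ⟪z, axial A⟫ ^ 2 + k3 * ‖crossV z (axial A)‖ ^ 2
          + a * (trace33sq A - (trace33 A) ^ 2)) ∧
    (∀ (z : E3) (A : M33), a * ‖A‖ ^ 2 ≤ W a k1 k2 k3 z A) := by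
  obtain ⟨h1, h2, h3⟩ : a ≤ k1 ∧ a ≤ k2 ∧ a ≤ k3 := by simpa only [le_min_iff] using hmin
  refine ⟨fun z hz A => ?_, mul_norm_sq_le_W h1 h2 h3⟩
  rw [W_eq_add_mul_one_sub_norm_sq, hz]
  ring

/-- for unit vectors z the rewritten Oseen–Frank density satisfies
W(z,A) = k₁(tr A)² + k₂⟨z, c(A)⟩² + k₃‖z × c(A)‖² + a(tr(A·A) − (tr A)²), and for all z
the coercivity bound W(z,A) ≥ a‖A‖² holds. -/
theorem oseen_frank_identity_and_coercivity (a k1 k2 k3 : ℝ)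
    (ha : 0 < a) (hmin : a ≤ min k1 (min k2 k3)) :
    (∀ z : E3, ‖z‖ = 1 → ∀ A : M33,
      W a k1 k2 k3 z A =
        k1 * (trace33 A) ^ 2 + k2 * ⟪z, axial A⟫ ^ 2 + k3 * ‖crossV z (axial A)‖ ^ 2
          + a * (trace33sq A - (trace33 A) ^ 2)) ∧
    (∀ (z : E3) (A : M33), a * ‖A‖ ^ 2 ≤ W a k1 k2 k3 z A) :=
  oseen_frank_identity_and_coercivity_general a k1 k2 k3 hmin

end
end

section
/- Let a, k₁, k₂, k₃ be real numbers with 0 < a ≤ min{k₁, k₂, k₃} and let W be the rewritten Oseen–Frank density. For every fixed z ∈ ℝ³, the map A ↦ W(z,A) on real 3×3 matrices is smooth, and for every A and every 3×3 matrix ξ its second Fréchet derivative at A applied to the pair (ξ, ξ) equals 2·W(z,ξ); in particular this second derivative applied to (ξ, ξ) is ≥ 2a‖ξ‖² ≥ a‖ξ‖², where ‖ξ‖ is the Frobenius norm (the Legendre ellipticity condition W_{p_α^i p_β^j}(z,p) ξ_α^i ξ_β^j ≥ a|ξ|²). -/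
open scoped RealInnerProductSpace

noncomputable section

lemma axial_add (A B : M33) : axial (A + B) = axial A + axial B := by
  ext i; fin_cases i <;> simp [axial] <;> ring

lemma axial_smul (c : ℝ) (A : M33) : axial (c • A) = c • axial A := by
  ext i; fin_cases i <;> simp [axial] <;> ring

lemma trace33_add (A B : M33) : trace33 (A + B) = trace33 A + trace33 B := by
  simp [trace33, Finset.sum_add_distrib]

lemma trace33_smul (c : ℝ) (A : M33) : trace33 (c • A) = c * trace33 A := by
  simp [trace33, Finset.mul_sum]

lemma crossV_add_right (z : E3) (u v : E3) : crossV z (u + v) = crossV z u + crossV z v := by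
  ext i; fin_cases i <;> simp [crossV] <;> ring

lemma crossV_smul_right (z : E3) (c : ℝ) (u : E3) : crossV z (c • u) = c • crossV z u := by
  ext i; fin_cases i <;> simp [crossV] <;> ring

/-- The symmetric bilinear form underlying W. -/
def bform (a k1 k2 k3 : ℝ) (z : E3) (A C : M33) : ℝ :=
  a * ⟪A, C⟫ + (k1 - a) * (trace33 A * trace33 C) + (k2 - a) * (⟪z, axial A⟫ * ⟪z, axial C⟫)
    + (k3 - a) * ⟪crossV z (axial A), crossV z (axial C)⟫

lemma bform_symm (a k1 k2 k3 : ℝ) (z : E3) (A C : M33) :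
    bform a k1 k2 k3 z A C = bform a k1 k2 k3 z C A := by
  simp only [bform, real_inner_comm A C, real_inner_comm (crossV z (axial A))]
  ring

lemma bform_self (a k1 k2 k3 : ℝ) (z : E3) (A : M33) :
    bform a k1 k2 k3 z A A = W a k1 k2 k3 z A := by
  simp only [bform, W, real_inner_self_eq_norm_sq]
  ring

def bLin (a k1 k2 k3 : ℝ) (z : E3) : M33 →ₗ[ℝ] M33 →ₗ[ℝ] ℝ :=
  LinearMap.mk₂ ℝ (bform a k1 k2 k3 z)
    (fun A A' C => by
      simp only [bform, axial_add, trace33_add, inner_add_left, inner_add_right,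
        crossV_add_right]
      ring)
    (fun c A C => by
      simp only [bform, axial_smul, trace33_smul, inner_smul_left, inner_smul_right,
        crossV_smul_right, RCLike.star_def, starRingEnd_apply, star_trivial, smul_eq_mul]
      ring)
    (fun A C C' => by
      simp only [bform, axial_add, trace33_add, inner_add_left, inner_add_right,
        crossV_add_right]
      ring)
    (fun c A C => by
      simp only [bform, axial_smul, trace33_smul, inner_smul_left, inner_smul_right,
        crossV_smul_right, RCLike.star_def, starRingEnd_apply, star_trivial, smul_eq_mul]
      ring)

def bCLM (a k1 k2 k3 : ℝ) (z : E3) : M33 →L[ℝ] M33 →L[ℝ] ℝ :=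
  LinearMap.toContinuousLinearMap
    (((LinearMap.toContinuousLinearMap :
        (M33 →ₗ[ℝ] ℝ) ≃ₗ[ℝ] (M33 →L[ℝ] ℝ)).toLinearMap).comp (bLin a k1 k2 k3 z))

lemma bCLM_apply (a k1 k2 k3 : ℝ) (z : E3) (A C : M33) :
    bCLM a k1 k2 k3 z A C = bform a k1 k2 k3 z A C := by
  simp [bCLM, bLin]

lemma hasFDerivAt_W (a k1 k2 k3 : ℝ) (z : E3) (A : M33) :
    HasFDerivAt (fun B : M33 => W a k1 k2 k3 z B) ((2 : ℝ) • bCLM a k1 k2 k3 z A) A := by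
  have hbb := (bCLM a k1 k2 k3 z).isBoundedBilinearMap
  have h1 := hbb.hasFDerivAt (A, A)
  have h2 : HasFDerivAt (fun B : M33 => (B, B))
      ((ContinuousLinearMap.id ℝ M33).prod (ContinuousLinearMap.id ℝ M33)) A :=
    (hasFDerivAt_id A).prodMk (hasFDerivAt_id A)
  have h3 := HasFDerivAt.comp (f := fun B : M33 => (B, B)) A h1 h2
  have heq : (fun B : M33 => W a k1 k2 k3 z B)
      = fun B : M33 => bCLM a k1 k2 k3 z B B := by
    funext B
    rw [bCLM_apply, bform_self]
  rw [heq]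
  refine (h3 : HasFDerivAt (fun B : M33 => bCLM a k1 k2 k3 z B B) _ A).congr_fderiv (Eq.symm ?_)
  ext ξ
  simp [hbb.deriv_apply, bCLM_apply, two_smul, bform_symm a k1 k2 k3 z ξ A]

lemma fderiv_W (a k1 k2 k3 : ℝ) (z : E3) :
    fderiv ℝ (fun B : M33 => W a k1 k2 k3 z B)
      = fun A => ((2 : ℝ) • bCLM a k1 k2 k3 z) A := by
  funext A
  rw [(hasFDerivAt_W a k1 k2 k3 z A).fderiv]
  simp

lemma iteratedFDeriv_two_W (a k1 k2 k3 : ℝ) (z : E3) (A ξ : M33) :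
    iteratedFDeriv ℝ 2 (fun B : M33 => W a k1 k2 k3 z B) A (fun _ => ξ)
      = 2 * W a k1 k2 k3 z ξ := by
  rw [iteratedFDeriv_two_apply, fderiv_W, ContinuousLinearMap.fderiv]
  simp [bCLM_apply, bform_self]

/-- for every fixed z, the map A ↦ W(z,A) is smooth, its second Fréchet
derivative at any A applied to (ξ,ξ) equals 2·W(z,ξ), and in particular it is
≥ 2a‖ξ‖² ≥ a‖ξ‖² (Legendre ellipticity). -/
theorem oseen_frank_smooth_and_legendre_ellipticity (a k1 k2 k3 : ℝ)
    (ha : 0 < a) (hmin : a ≤ min k1 (min k2 k3)) (z : E3) :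
    ContDiff ℝ (⊤ : ℕ∞) (fun A : M33 => W a k1 k2 k3 z A) ∧
    ∀ (A ξ : M33),
      (iteratedFDeriv ℝ 2 (fun B : M33 => W a k1 k2 k3 z B) A (fun _ => ξ)
          = 2 * W a k1 k2 k3 z ξ) ∧
      2 * a * ‖ξ‖ ^ 2 ≤ iteratedFDeriv ℝ 2 (fun B : M33 => W a k1 k2 k3 z B) A (fun _ => ξ) ∧
      a * ‖ξ‖ ^ 2 ≤ iteratedFDeriv ℝ 2 (fun B : M33 => W a k1 k2 k3 z B) A (fun _ => ξ) := by
  obtain ⟨h1, h2, h3⟩ : a ≤ k1 ∧ a ≤ k2 ∧ a ≤ k3 := by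
    rw [le_min_iff, le_min_iff] at hmin; tauto
  constructor
  · have heq : (fun B : M33 => W a k1 k2 k3 z B)
        = (fun p : M33 × M33 => bCLM a k1 k2 k3 z p.1 p.2) ∘ fun B : M33 => (B, B) := by
      funext B
      simp [Function.comp, bCLM_apply, bform_self]
    rw [heq]
    exact ((bCLM a k1 k2 k3 z).isBoundedBilinearMap.contDiff).comp (contDiff_id.prodMk contDiff_id)
  · intro A ξ
    have hW : a * ‖ξ‖ ^ 2 ≤ W a k1 k2 k3 z ξ := by
      have e1 : 0 ≤ (k1 - a) * (trace33 ξ) ^ 2 :=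
        mul_nonneg (by linarith) (sq_nonneg _)
      have e2 : 0 ≤ (k2 - a) * ⟪z, axial ξ⟫ ^ 2 :=
        mul_nonneg (by linarith) (sq_nonneg _)
      have e3 : 0 ≤ (k3 - a) * ‖crossV z (axial ξ)‖ ^ 2 :=
        mul_nonneg (by linarith) (sq_nonneg _)
      simp only [W]; linarith
    have hpos : 0 ≤ a * ‖ξ‖ ^ 2 := mul_nonneg ha.le (sq_nonneg _)
    rw [iteratedFDeriv_two_W]
    exact ⟨rfl, by linarith, by linarith⟩

end
end

section
/- Let q ∈ [1, ∞). There exists a constant C depending only on q such that: for every locally integrable f : ℝ³ → ℝ with f ∈ L^q(ℝ³) and finite BMO seminorm [f]_{BMO}, for every x ∈ ℝ³ and every radius r ∈ (0, 1), the average f_r(x) of f over the ball B_r(x) satisfies |f_r(x)| ≤ C ((1 + |ln r|) [f]_{BMO} + ‖f‖_{L^q(ℝ³)}). -/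
open MeasureTheory

noncomputable section

/-- The set of averages over balls of |g − (average of g)|, whose supremum is the BMO
seminorm of g. -/
def bmoSet (g : E3 → ℝ) : Set ℝ :=
  { m : ℝ | ∃ (x : E3) (ρ : ℝ), 0 < ρ ∧
      m = ⨍ y in Metric.ball x ρ, |g y - ⨍ z in Metric.ball x ρ, g z| }

/-- The BMO seminorm of g : ℝ³ → ℝ, the supremum over all centers x and radii ρ > 0 of
the average over B_ρ(x) of |g − g_{B_ρ(x)}|. -/
def bmoSeminorm (g : E3 → ℝ) : ℝ := sSup (bmoSet g)

/-! Doubling a ball changes the average of `f` by at most `2³ [f]_BMO`: the mean oscillation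
of `f` about `f_{B_{2ρ}}` over `B_ρ` is at most `2³` times the one over `B_{2ρ}`. About
`log₂ (1/r) + 1` doublings take `B_r(x)` to a ball of radius `ρ ≥ 1`, on which Hölder's
inequality gives `|f_ρ(x)| ≤ |B_1|^{-1/q} ‖f‖_{L^q}`. -/

open Metric Module Measure
open scoped ENNReal

section Averages

variable {α F : Type*} [MeasurableSpace α] {μ : Measure α} {s : Set α}
  [NormedAddCommGroup F] [NormedSpace ℝ F]

theorem norm_setAverage_le_setAverage_norm (f : α → F) :
    ‖⨍ x in s, f x ∂μ‖ ≤ ⨍ x in s, ‖f x‖ ∂μ := by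
  rw [setAverage_eq, setAverage_eq, norm_smul, smul_eq_mul, norm_inv, Real.norm_of_nonneg
    measureReal_nonneg]
  gcongr
  exact norm_integral_le_integral_norm f

theorem setAverage_sub_const [CompleteSpace F] (hs₀ : μ s ≠ 0) (hs : μ s ≠ ∞) {f : α → F}
    (hf : IntegrableOn f s μ) (c : F) :
    ⨍ x in s, (f x - c) ∂μ = ⨍ x in s, f x ∂μ - c := by
  rw [setAverage_eq, setAverage_eq, integral_sub hf (integrableOn_const hs), setIntegral_const,
    smul_sub, inv_smul_smul₀ (measureReal_ne_zero_iff hs |>.2 hs₀)]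

theorem norm_setAverage_le_measureReal_rpow_mul_eLpNorm {q : ℝ} (hq : 1 ≤ q) {f : α → F}
    (hf : MemLp f (ENNReal.ofReal q) μ) (hs : μ s ≠ ∞) :
    ‖⨍ x in s, f x ∂μ‖ ≤ μ.real s ^ (-q⁻¹) * (eLpNorm f (ENNReal.ofReal q) μ).toReal := by
  rcases eq_or_ne (μ s) 0 with hs₀ | hs₀
  · rw [Measure.restrict_eq_zero.2 hs₀, average_zero_measure, norm_zero]
    positivity
  have hm : 0 < μ.real s := ENNReal.toReal_pos hs₀ hs
  have hfs : AEStronglyMeasurable f (μ.restrict s) := hf.1.restrict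
  have holder : eLpNorm f 1 (μ.restrict s)
      ≤ eLpNorm f (ENNReal.ofReal q) μ * μ s ^ (1 - q⁻¹) := by
    have h := eLpNorm_le_eLpNorm_mul_rpow_measure_univ
      (ENNReal.one_le_ofReal.2 hq) hfs
    rw [ENNReal.toReal_one, ENNReal.toReal_ofReal (by linarith), div_one, one_div,
      Measure.restrict_apply_univ] at h
    exact h.trans (mul_le_mul_left (eLpNorm_mono_measure f Measure.restrict_le_self) _)
  have hint : ∫ x in s, ‖f x‖ ∂μ
      ≤ (eLpNorm f (ENNReal.ofReal q) μ).toReal * μ.real s ^ (1 - q⁻¹) := by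
    rw [integral_norm_eq_lintegral_enorm hfs, ← eLpNorm_one_eq_lintegral_enorm, measureReal_def,
      ENNReal.toReal_rpow, ← ENNReal.toReal_mul]
    exact ENNReal.toReal_mono (ENNReal.mul_ne_top hf.2.ne (by finiteness)) holder
  calc ‖⨍ x in s, f x ∂μ‖ ≤ (μ.real s)⁻¹ * ∫ x in s, ‖f x‖ ∂μ := by
        simpa only [setAverage_eq, smul_eq_mul] using norm_setAverage_le_setAverage_norm f
    _ ≤ (μ.real s)⁻¹ * ((eLpNorm f (ENNReal.ofReal q) μ).toReal * μ.real s ^ (1 - q⁻¹)) := by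
        gcongr
    _ = μ.real s ^ (-q⁻¹) * (eLpNorm f (ENNReal.ofReal q) μ).toReal := by
        rw [Real.rpow_sub hm, Real.rpow_one, Real.rpow_neg hm.le]
        field_simp

end Averages

section AddHaar

variable {E : Type*} [NormedAddCommGroup E] [NormedSpace ℝ E] [MeasurableSpace E] [BorelSpace E]
  [FiniteDimensional ℝ E] (μ : Measure E) [IsAddHaarMeasure μ]

theorem addHaar_real_ball_two_mul (x : E) (ρ : ℝ) :
    μ.real (ball x (2 * ρ)) = 2 ^ finrank ℝ E * μ.real (ball x ρ) := by
  simp only [measureReal_def, addHaar_ball_mul_of_pos μ x two_pos, addHaar_ball_center,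
    ENNReal.toReal_mul, ENNReal.toReal_ofReal (by positivity : (0 : ℝ) ≤ 2 ^ finrank ℝ E)]

theorem setAverage_ball_le_two_pow_finrank_mul {g : E → ℝ} (hg₀ : 0 ≤ g) (x : E) {ρ : ℝ}
    (hρ : 0 ≤ ρ) (hg : IntegrableOn g (ball x (2 * ρ)) μ) :
    ⨍ y in ball x ρ, g y ∂μ ≤ 2 ^ finrank ℝ E * ⨍ y in ball x (2 * ρ), g y ∂μ := by
  have hsub : ball x ρ ⊆ ball x (2 * ρ) := ball_subset_ball (by linarith)
  rw [setAverage_eq, setAverage_eq, smul_eq_mul, smul_eq_mul, addHaar_real_ball_two_mul μ x ρ,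
    mul_inv, ← mul_assoc, mul_inv_cancel_left₀ (by positivity)]
  exact mul_le_mul_of_nonneg_left (setIntegral_mono_set hg (.of_forall hg₀) (.of_forall hsub))
    (by positivity)

theorem norm_setAverage_ball_le_of_one_le {F : Type*} [NormedAddCommGroup F] [NormedSpace ℝ F]
    {q : ℝ} (hq : 1 ≤ q) {f : E → F} (hf : MemLp f (ENNReal.ofReal q) μ) (x : E) {ρ : ℝ}
    (hρ : 1 ≤ ρ) :
    ‖⨍ y in ball x ρ, f y ∂μ‖
      ≤ μ.real (ball (0 : E) 1) ^ (-q⁻¹) * (eLpNorm f (ENNReal.ofReal q) μ).toReal := by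
  refine (norm_setAverage_le_measureReal_rpow_mul_eLpNorm hq hf measure_ball_lt_top.ne).trans ?_
  refine mul_le_mul_of_nonneg_right (Real.rpow_le_rpow_of_nonpos
    (ENNReal.toReal_pos (measure_ball_pos μ 0 one_pos).ne' measure_ball_lt_top.ne) ?_
    (neg_nonpos.2 (by positivity))) ENNReal.toReal_nonneg
  rw [← addHaar_real_ball_center μ x]
  exact measureReal_mono (ball_subset_ball hρ)

end AddHaar

theorem abs_sub_two_pow_mul_le {a : ℝ → ℝ} {K : ℝ} (h : ∀ ρ > 0, |a ρ - a (2 * ρ)| ≤ K)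
    {r : ℝ} (hr : 0 < r) (n : ℕ) : |a r - a (2 ^ n * r)| ≤ n * K := by
  induction n with
  | zero => simp
  | succ n ih =>
    calc |a r - a (2 ^ (n + 1) * r)|
        ≤ |a r - a (2 ^ n * r)| + |a (2 ^ n * r) - a (2 * (2 ^ n * r))| := by
          rw [← mul_assoc, ← pow_succ']; exact abs_sub_le _ _ _
      _ ≤ n * K + K := add_le_add ih (h _ (by positivity))
      _ = (n + 1 : ℕ) * K := by push_cast; ring

theorem exists_one_le_two_pow_mul_of_le_one {r : ℝ} (hr₀ : 0 < r) (hr₁ : r ≤ 1) :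
    ∃ n : ℕ, 1 ≤ 2 ^ n * r ∧ (n : ℝ) ≤ 2 * (1 + |Real.log r|) := by
  obtain ⟨m, hm, hm'⟩ := exists_nat_pow_near (one_le_inv_iff₀.2 ⟨hr₀, hr₁⟩) one_lt_two
  have hlog : m * Real.log 2 ≤ |Real.log r| := by
    rw [← Real.log_pow, abs_of_nonpos (Real.log_nonpos hr₀.le hr₁), ← Real.log_inv]
    exact Real.log_le_log (by positivity) hm
  have hlog2 : 1 / 2 < Real.log 2 := by linarith [Real.log_two_gt_d9]
  refine ⟨m + 1, ?_, ?_⟩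
  · rw [inv_lt_iff_one_lt_mul₀ hr₀] at hm'
    exact hm'.le
  · push_cast
    nlinarith [abs_nonneg (Real.log r)]

theorem le_bmoSeminorm {f : E3 → ℝ} (hb : BddAbove (bmoSet f)) (x : E3) {ρ : ℝ} (hρ : 0 < ρ) :
    ⨍ y in ball x ρ, |f y - ⨍ z in ball x ρ, f z| ≤ bmoSeminorm f :=
  le_csSup hb ⟨x, ρ, hρ, rfl⟩

theorem bmoSeminorm_nonneg {f : E3 → ℝ} (hb : BddAbove (bmoSet f)) : 0 ≤ bmoSeminorm f :=
  (abs_nonneg _).trans <| (norm_setAverage_le_setAverage_norm (μ := volume) (s := ball 0 1)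
    fun y => f y - ⨍ z in ball 0 1, f z).trans (le_bmoSeminorm hb 0 one_pos)

theorem abs_setAverage_ball_sub_setAverage_ball_two_mul_le {f : E3 → ℝ}
    (hf : LocallyIntegrable f volume) (hb : BddAbove (bmoSet f)) (x : E3) {ρ : ℝ} (hρ : 0 < ρ) :
    |(⨍ y in ball x ρ, f y) - ⨍ y in ball x (2 * ρ), f y| ≤ 8 * bmoSeminorm f := by
  set c := ⨍ y in ball x (2 * ρ), f y
  have hint : IntegrableOn f (ball x (2 * ρ)) volume :=
    (hf.integrableOn_isCompact (isCompact_closedBall x _)).mono_set ball_subset_closedBall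
  calc |(⨍ y in ball x ρ, f y) - c| = |⨍ y in ball x ρ, (f y - c)| := by
        rw [setAverage_sub_const (measure_ball_pos volume x hρ).ne' measure_ball_lt_top.ne
          (hint.mono_set (ball_subset_ball (by linarith)))]
    _ ≤ ⨍ y in ball x ρ, |f y - c| := norm_setAverage_le_setAverage_norm fun y => f y - c
    _ ≤ 2 ^ finrank ℝ E3 * ⨍ y in ball x (2 * ρ), |f y - c| :=
        setAverage_ball_le_two_pow_finrank_mul volume (fun _ => abs_nonneg _) x hρ.le
          (hint.sub (integrableOn_const measure_ball_lt_top.ne)).abs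
    _ ≤ 8 * bmoSeminorm f := by
        rw [finrank_euclideanSpace_fin]
        norm_num
        exact le_bmoSeminorm hb x (by positivity)

/-- there is a constant C depending only on q ∈ [1,∞) such that for every
locally integrable f ∈ L^q(ℝ³) with finite BMO seminorm, every x and every radius
r ∈ (0,1), the ball average f_r(x) satisfies
|f_r(x)| ≤ C((1 + |ln r|)[f]_BMO + ‖f‖_{L^q}). -/
theorem ball_average_bmo_bound (q : ℝ) (hq : 1 ≤ q) :
    ∃ C : ℝ, ∀ f : E3 → ℝ,
      LocallyIntegrable f volume →
      MemLp f (ENNReal.ofReal q) volume →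
      BddAbove (bmoSet f) →
      ∀ (x : E3) (r : ℝ), 0 < r → r < 1 →
        |⨍ y in Metric.ball x r, f y| ≤
          C * ((1 + |Real.log r|) * bmoSeminorm f
            + (eLpNorm f (ENNReal.ofReal q) volume).toReal) := by
  set Cq := volume.real (ball (0 : E3) 1) ^ (-q⁻¹)
  refine ⟨16 + Cq, fun f hf hm hb x r hr₀ hr₁ => ?_⟩
  obtain ⟨n, hn, hn_log⟩ := exists_one_le_two_pow_mul_of_le_one hr₀ hr₁.le
  set L := (eLpNorm f (ENNReal.ofReal q) volume).toReal
  set A := ⨍ y in ball x r, f y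
  set A_far := ⨍ y in ball x (2 ^ n * r), f y
  have h_chain : |A - A_far| ≤ n * (8 * bmoSeminorm f) :=
    abs_sub_two_pow_mul_le (a := fun ρ => ⨍ y in ball x ρ, f y)
      (fun _ hρ => abs_setAverage_ball_sub_setAverage_ball_two_mul_le hf hb x hρ) hr₀ n
  have h_far : |A_far| ≤ Cq * L := norm_setAverage_ball_le_of_one_le volume hq hm x hn
  have hbmo := bmoSeminorm_nonneg hb
  have hlog : 0 ≤ 1 + |Real.log r| := by positivity
  have hCq : 0 ≤ Cq := by positivity
  have hL : 0 ≤ L := ENNReal.toReal_nonneg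
  calc |A| ≤ |A - A_far| + |A_far| := norm_le_norm_sub_add A A_far
    _ ≤ 16 * ((1 + |Real.log r|) * bmoSeminorm f) + Cq * L := by
        nlinarith [mul_le_mul_of_nonneg_right hn_log hbmo]
    _ ≤ (16 + Cq) * ((1 + |Real.log r|) * bmoSeminorm f + L) := by
        nlinarith [mul_nonneg hCq (mul_nonneg hlog hbmo), mul_nonneg hlog hbmo]

end
end

section
/- There exists an absolute constant C > 0 such that for every twice continuously differentiable compactly supported v : ℝ³ → ℝ³, ∫_{ℝ³} |∇v|⁴ dx ≤ C ∫_{ℝ³} |v|² |∇²v|² dx. -/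
open MeasureTheory

noncomputable section

/-- The j-th partial derivative of a scalar function on ℝ³. -/
def pder (j : Fin 3) (f : E3 → ℝ) : E3 → ℝ :=
  fun x => fderiv ℝ f x (EuclideanSpace.single j 1)

/-- |∇v|², the squared Euclidean norm of the gradient of v : ℝ³ → ℝ³. -/
def grad2 (v : E3 → E3) (x : E3) : ℝ :=
  ∑ i : Fin 3, ∑ j : Fin 3, (pder j (fun y => v y i) x) ^ 2

/-- |∇²v|², the squared norm of the second derivatives of v : ℝ³ → ℝ³. -/
def hess2 (v : E3 → E3) (x : E3) : ℝ :=
  ∑ i : Fin 3, ∑ j : Fin 3, ∑ k : Fin 3, (pder k (pder j (fun y => v y i)) x) ^ 2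

/-- |∇³v|², the squared norm of the third derivatives of v : ℝ³ → ℝ³. -/
def third2 (v : E3 → E3) (x : E3) : ℝ :=
  ∑ i : Fin 3, ∑ j : Fin 3, ∑ k : Fin 3, ∑ l : Fin 3,
    (pder l (pder k (pder j (fun y => v y i))) x) ^ 2

/-! Write `G = |∇v|²`. Since `∫ G² = ∑ᵢⱼ ∫ ∂ⱼvⁱ · (∂ⱼvⁱ G)`, one integration by parts moves the
derivative onto `∂ⱼvⁱ G`, giving `∫ G² = -∫ ∑ᵢⱼ vⁱ (∂ⱼ∂ⱼvⁱ G + ∂ⱼvⁱ ∂ⱼG)`. As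
`|∂ⱼG| ≤ 18 |∇v| |∇²v|`, this integrand is at most `171 |v| |∇²v| G ≤ G²/2 + 171²/2 |v|² |∇²v|²`,
and absorbing `∫ G²/2` into the left side gives the bound with `C = 171²`. -/

open Finset

section DoubleSum

variable {ι κ : Type*} [Fintype ι] [Fintype κ]

theorem abs_sum_sum_le {F : ι → κ → ℝ} {c : ℝ} (h : ∀ i j, |F i j| ≤ c) :
    |∑ i, ∑ j, F i j| ≤ Fintype.card ι * Fintype.card κ * c :=
  calc |∑ i, ∑ j, F i j| ≤ ∑ i, ∑ j, |F i j| :=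
        (abs_sum_le_sum_abs _ _).trans (sum_le_sum fun i _ => abs_sum_le_sum_abs _ _)
    _ ≤ ∑ _i : ι, ∑ _j : κ, c := sum_le_sum fun i _ => sum_le_sum fun j _ => h i j
    _ = Fintype.card ι * Fintype.card κ * c := by simp [mul_assoc]

theorem single_le_sum_sum {F : ι → κ → ℝ} (hF : ∀ i j, 0 ≤ F i j) (i : ι) (j : κ) :
    F i j ≤ ∑ i, ∑ j, F i j :=
  (single_le_sum (fun j _ => hF i j) (mem_univ j)).trans
    (single_le_sum (fun i _ => sum_nonneg fun j _ => hF i j) (mem_univ i))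

theorem integral_sum_sum {α : Type*} [MeasurableSpace α] {μ : Measure α} {F : ι → κ → α → ℝ}
    (hF : ∀ i j, Integrable (F i j) μ) :
    ∫ x, ∑ i, ∑ j, F i j x ∂μ = ∑ i, ∑ j, ∫ x, F i j x ∂μ := by
  rw [integral_finsetSum _ fun i _ => integrable_finsetSum _ fun j _ => hF i j]
  exact sum_congr rfl fun i _ => integral_finsetSum _ fun j _ => hF i j

end DoubleSum

section PartialDerivative

variable {f g : E3 → ℝ}

theorem ContDiff.pder {n m : WithTop ℕ∞} (hf : ContDiff ℝ n f) (h : m + 1 ≤ n) (j : Fin 3) :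
    ContDiff ℝ m (pder j f) :=
  (hf.fderiv_right h).clm_apply contDiff_const

theorem HasCompactSupport.pder (hf : HasCompactSupport f) (j : Fin 3) :
    HasCompactSupport (pder j f) :=
  hf.fderiv_apply ℝ _

theorem pder_mul (j : Fin 3) {x : E3} (hf : DifferentiableAt ℝ f x)
    (hg : DifferentiableAt ℝ g x) :
    pder j (fun y => f y * g y) x = pder j f x * g x + f x * pder j g x := by
  simp only [pder, fderiv_fun_mul hf hg, add_apply, smul_apply, smul_eq_mul]
  ring

theorem pder_sum {ι : Type*} (s : Finset ι) (F : ι → E3 → ℝ) (j : Fin 3) {x : E3}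
    (hF : ∀ i ∈ s, DifferentiableAt ℝ (F i) x) :
    pder j (fun y => ∑ i ∈ s, F i y) x = ∑ i ∈ s, pder j (F i) x := by
  simp [pder, fderiv_fun_sum hF]

theorem pder_sq (j : Fin 3) {x : E3} (hf : DifferentiableAt ℝ f x) :
    pder j (fun y => f y ^ 2) x = 2 * f x * pder j f x := by
  simp only [sq, pder_mul j hf hf]
  ring

theorem integral_pder_mul_eq_neg (hf : ContDiff ℝ 1 f) (hfs : HasCompactSupport f)
    (hg : ContDiff ℝ 1 g) (j : Fin 3) :
    ∫ x, pder j f x * g x = -∫ x, f x * pder j g x := by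
  have hf' : Continuous (pder j f) := (hf.pder (m := 0) le_rfl j).continuous
  have hg' : Continuous (pder j g) := (hg.pder (m := 0) le_rfl j).continuous
  refine neg_eq_iff_eq_neg.mp (integral_mul_fderiv_eq_neg_fderiv_mul_of_integrable
    ((hf'.mul hg.continuous).integrable_of_hasCompactSupport (hfs.pder j).mul_right)
    ((hf.continuous.mul hg').integrable_of_hasCompactSupport hfs.mul_right)
    ((hf.continuous.mul hg.continuous).integrable_of_hasCompactSupport hfs.mul_right)
    (fun x _ => hf.differentiable one_ne_zero x)
    (fun x _ => hg.differentiable one_ne_zero x)).symm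

end PartialDerivative

namespace GradFourthPowerBound

def coord (v : E3 → E3) (i : Fin 3) : E3 → ℝ := fun y => v y i

def jac (v : E3 → E3) (i j : Fin 3) : E3 → ℝ := pder j (coord v i)

def hess (v : E3 → E3) (i j k : Fin 3) : E3 → ℝ := pder k (jac v i j)

def ibpIntegrand (v : E3 → E3) (x : E3) : ℝ :=
  ∑ i : Fin 3, ∑ j : Fin 3, coord v i x * pder j (fun y => jac v i j y * grad2 v y) x

variable {v : E3 → E3}

section Pointwise

theorem grad2_nonneg (x : E3) : 0 ≤ grad2 v x := by
  unfold grad2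
  positivity

theorem hess2_nonneg (x : E3) : 0 ≤ hess2 v x := by
  unfold hess2
  positivity

theorem hasCompactSupport_coord (hvs : HasCompactSupport v) (i : Fin 3) :
    HasCompactSupport (coord v i) :=
  hvs.comp_left (g := fun u : E3 => u i) rfl

theorem abs_coord_le (i : Fin 3) (x : E3) : |coord v i x| ≤ ‖v x‖ :=
  PiLp.norm_apply_le (v x) i

theorem abs_jac_le (i j : Fin 3) (x : E3) : |jac v i j x| ≤ √(grad2 v x) :=
  Real.abs_le_sqrt <| single_le_sum_sum (F := fun i j => jac v i j x ^ 2)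
    (fun _ _ => sq_nonneg _) i j

theorem abs_hess_le (i j k : Fin 3) (x : E3) : |hess v i j k x| ≤ √(hess2 v x) :=
  Real.abs_le_sqrt <| (single_le_sum (fun k _ => sq_nonneg (hess v i j k x)) (mem_univ k)).trans
    (single_le_sum_sum (F := fun i j => ∑ k, hess v i j k x ^ 2)
      (fun _ _ => sum_nonneg fun _ _ => sq_nonneg _) i j)

theorem grad2_sq_eq_sum (x : E3) :
    grad2 v x ^ 2 = ∑ i : Fin 3, ∑ j : Fin 3, jac v i j x * (jac v i j x * grad2 v x) :=
  calc grad2 v x ^ 2 = (∑ i : Fin 3, ∑ j : Fin 3, jac v i j x ^ 2) * grad2 v x := sq _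
    _ = _ := by simp only [sum_mul, sq, mul_assoc]

end Pointwise

section Regularity

variable (hv : ContDiff ℝ 2 v)
include hv

theorem contDiff_coord (i : Fin 3) : ContDiff ℝ 2 (coord v i) :=
  (EuclideanSpace.proj i : E3 →L[ℝ] ℝ).contDiff.comp hv

theorem contDiff_jac (i j : Fin 3) : ContDiff ℝ 1 (jac v i j) :=
  (contDiff_coord hv i).pder (by norm_num) j

theorem continuous_hess (i j k : Fin 3) : Continuous (hess v i j k) :=
  ((contDiff_jac hv i j).pder (m := 0) le_rfl k).continuous

theorem contDiff_grad2 : ContDiff ℝ 1 (grad2 v) :=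
  ContDiff.sum fun i _ => ContDiff.sum fun j _ => (contDiff_jac hv i j).pow 2

theorem continuous_hess2 : Continuous (hess2 v) :=
  continuous_finsetSum _ fun i _ => continuous_finsetSum _ fun j _ =>
    continuous_finsetSum _ fun k _ => (continuous_hess hv i j k).pow 2

theorem pder_grad2 (j : Fin 3) (x : E3) :
    pder j (grad2 v) x = ∑ k : Fin 3, ∑ l : Fin 3, 2 * jac v k l x * hess v k l j x := by
  have hd : ∀ k l, DifferentiableAt ℝ (jac v k l) x :=
    fun k l => (contDiff_jac hv k l).differentiable one_ne_zero x
  refine (pder_sum univ (fun k y => ∑ l : Fin 3, jac v k l y ^ 2) j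
    fun k _ => DifferentiableAt.fun_sum fun l _ => (hd k l).pow 2).trans ?_
  exact sum_congr rfl fun k _ => (pder_sum univ (fun l y => jac v k l y ^ 2) j
    fun l _ => (hd k l).pow 2).trans (sum_congr rfl fun l _ => pder_sq j (hd k l))

theorem abs_pder_grad2_le (j : Fin 3) (x : E3) :
    |pder j (grad2 v) x| ≤ 18 * (√(grad2 v x) * √(hess2 v x)) := by
  rw [pder_grad2 hv]
  refine (abs_sum_sum_le (c := 2 * (√(grad2 v x) * √(hess2 v x))) fun k l => ?_).trans_eq
    (by norm_num; ring)
  rw [abs_mul, abs_mul, abs_two, mul_assoc]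
  gcongr
  exacts [abs_jac_le k l x, abs_hess_le k l j x]

theorem ibpIntegrand_eq (x : E3) :
    ibpIntegrand v x = ∑ i : Fin 3, ∑ j : Fin 3,
      coord v i x * (hess v i j j x * grad2 v x + jac v i j x * pder j (grad2 v) x) := by
  refine sum_congr rfl fun i _ => sum_congr rfl fun j _ => ?_
  rw [pder_mul j ((contDiff_jac hv i j).differentiable one_ne_zero x)
    ((contDiff_grad2 hv).differentiable one_ne_zero x)]
  rfl

theorem abs_ibpIntegrand_le (x : E3) :
    |ibpIntegrand v x| ≤ 171 * (‖v x‖ * √(hess2 v x)) * grad2 v x := by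
  have hG := grad2_nonneg (v := v) x
  rw [ibpIntegrand_eq hv]
  refine (abs_sum_sum_le (c := 19 * (‖v x‖ * √(hess2 v x)) * grad2 v x) fun i j => ?_).trans_eq
    (by norm_num; ring)
  calc |coord v i x * (hess v i j j x * grad2 v x + jac v i j x * pder j (grad2 v) x)|
      ≤ ‖v x‖ * (√(hess2 v x) * grad2 v x
          + √(grad2 v x) * (18 * (√(grad2 v x) * √(hess2 v x)))) := by
        rw [abs_mul]
        refine mul_le_mul (abs_coord_le i x) ((abs_add_le _ _).trans ?_) (abs_nonneg _)
          (norm_nonneg _)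
        rw [abs_mul, abs_mul, abs_of_nonneg hG]
        gcongr
        exacts [abs_hess_le i j j x, abs_jac_le i j x, abs_pder_grad2_le hv j x]
    _ = 19 * (‖v x‖ * √(hess2 v x)) * grad2 v x := by
        linear_combination (18 * ‖v x‖ * √(hess2 v x)) * Real.mul_self_sqrt hG

theorem neg_ibpIntegrand_le (x : E3) :
    -ibpIntegrand v x ≤ grad2 v x ^ 2 / 2 + 171 ^ 2 / 2 * (‖v x‖ ^ 2 * hess2 v x) :=
  calc -ibpIntegrand v x ≤ 171 * (‖v x‖ * √(hess2 v x)) * grad2 v x :=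
        (neg_le_abs _).trans (abs_ibpIntegrand_le hv x)
    _ ≤ grad2 v x ^ 2 / 2 + 171 ^ 2 / 2 * (‖v x‖ * √(hess2 v x)) ^ 2 := by
        nlinarith [two_mul_le_add_sq (grad2 v x) (171 * (‖v x‖ * √(hess2 v x)))]
    _ = grad2 v x ^ 2 / 2 + 171 ^ 2 / 2 * (‖v x‖ ^ 2 * hess2 v x) := by
        rw [mul_pow, Real.sq_sqrt (hess2_nonneg x)]

end Regularity

section Integrability

variable (hv : ContDiff ℝ 2 v) (hvs : HasCompactSupport v)
include hv hvs

theorem integrable_jac_mul_jac_mul_grad2 (i j : Fin 3) :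
    Integrable fun x => jac v i j x * (jac v i j x * grad2 v x) := by
  have hjac := (contDiff_jac hv i j).continuous
  exact (hjac.mul (hjac.mul (contDiff_grad2 hv).continuous)).integrable_of_hasCompactSupport
    ((hasCompactSupport_coord hvs i).pder j).mul_right

theorem integrable_coord_mul_pder (i j : Fin 3) :
    Integrable fun x => coord v i x * pder j (fun y => jac v i j y * grad2 v y) x :=
  ((contDiff_coord hv i).continuous.mul
      (((contDiff_jac hv i j).mul (contDiff_grad2 hv)).pder (m := 0) le_rfl j).continuous
    ).integrable_of_hasCompactSupport (hasCompactSupport_coord hvs i).mul_right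

theorem integrable_grad2_sq : Integrable fun x => grad2 v x ^ 2 := by
  simp only [grad2_sq_eq_sum]
  exact integrable_finsetSum _ fun i _ => integrable_finsetSum _ fun j _ =>
    integrable_jac_mul_jac_mul_grad2 hv hvs i j

theorem integrable_norm_sq_mul_hess2 : Integrable fun x => ‖v x‖ ^ 2 * hess2 v x := by
  have hs : HasCompactSupport fun x => ‖v x‖ ^ 2 :=
    hvs.comp_left (g := fun u : E3 => ‖u‖ ^ 2) (by simp)
  exact ((hv.continuous.norm.pow 2).mul (continuous_hess2 hv)).integrable_of_hasCompactSupport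
    hs.mul_right

theorem integrable_ibpIntegrand : Integrable (ibpIntegrand v) :=
  integrable_finsetSum _ fun i _ => integrable_finsetSum _ fun j _ =>
    integrable_coord_mul_pder hv hvs i j

theorem integral_grad2_sq : ∫ x, grad2 v x ^ 2 = -∫ x, ibpIntegrand v x :=
  calc ∫ x, grad2 v x ^ 2
      = ∑ i : Fin 3, ∑ j : Fin 3, ∫ x, jac v i j x * (jac v i j x * grad2 v x) := by
        simp only [grad2_sq_eq_sum]
        exact integral_sum_sum (integrable_jac_mul_jac_mul_grad2 hv hvs)
    _ = ∑ i : Fin 3, ∑ j : Fin 3,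
          -∫ x, coord v i x * pder j (fun y => jac v i j y * grad2 v y) x :=
        sum_congr rfl fun i _ => sum_congr rfl fun j _ =>
          integral_pder_mul_eq_neg ((contDiff_coord hv i).of_le one_le_two)
            (hasCompactSupport_coord hvs i)
            ((contDiff_jac hv i j).mul (contDiff_grad2 hv)) j
    _ = -∫ x, ibpIntegrand v x := by
        simp only [sum_neg_distrib, ibpIntegrand,
          integral_sum_sum (integrable_coord_mul_pder hv hvs)]

end Integrability

end GradFourthPowerBound

open GradFourthPowerBound

/-- there is an absolute constant C > 0 such that for every C² compactly
supported v : ℝ³ → ℝ³, ∫ |∇v|⁴ ≤ C ∫ |v|² |∇²v|². -/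
theorem grad_fourth_power_bound :
    ∃ C : ℝ, 0 < C ∧ ∀ v : E3 → E3, ContDiff ℝ 2 v → HasCompactSupport v →
      ∫ x, (grad2 v x) ^ 2 ≤ C * ∫ x, ‖v x‖ ^ 2 * hess2 v x := by
  refine ⟨171 ^ 2, by norm_num, fun v hv hvs => ?_⟩
  have hG := integrable_grad2_sq hv hvs
  have hH := (integrable_norm_sq_mul_hess2 hv hvs).const_mul (171 ^ 2 / 2)
  have h : ∫ x, grad2 v x ^ 2
      ≤ (∫ x, grad2 v x ^ 2) / 2 + 171 ^ 2 / 2 * ∫ x, ‖v x‖ ^ 2 * hess2 v x :=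
    calc ∫ x, grad2 v x ^ 2 = ∫ x, -ibpIntegrand v x := by
          rw [integral_neg, integral_grad2_sq hv hvs]
      _ ≤ ∫ x, (grad2 v x ^ 2 / 2 + 171 ^ 2 / 2 * (‖v x‖ ^ 2 * hess2 v x)) :=
          integral_mono (integrable_ibpIntegrand hv hvs).neg ((hG.div_const 2).add hH)
            (neg_ibpIntegrand_le hv)
      _ = _ := by rw [integral_add (hG.div_const 2) hH, integral_div, integral_const_mul]
  linarith

end
end
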